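/- The set F of fusible numbers, defined as the least subset of the reals containing 0 and closed under the operation (x,y) ↦ (x+y+1)/2 whenever (x+y+1)/2 > max(x,y), is a well-ordered subset of the reals under the usual order. -/

import Mathlib

open Set Pointwise

/-!
Write `F` for the fusible numbers and call `r` good when `F ∩ (-∞, r)` is well-ordered. Every
`r ≤ 0` is good, and if every `r < s` is good then so is `s`; by real induction it suffices to
push any good `s` a little further. Since `s - 1` is good, `F` has a gap `(s - 1, b)` with
`b > s - 1`. A fusible `z = (x + y + 1)/2 < (s + b + 1)/2` with `max x y ≥ s` would put
`min x y` in that gap, so every nonzero fusible `z` below `(s + b + 1)/2` is either below `s`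
or of the form `(x + y + 1)/2` with `x, y ∈ F ∩ (-∞, s)`. Sums and monotone images of
well-ordered sets are well-ordered, so `(s + b + 1)/2 > s` is good.
-/

/-- The set of fusible numbers: least subset of ℝ containing 0 and closed
under `(x,y) ↦ (x+y+1)/2` whenever the result exceeds `max x y`. -/
inductive Fusible : ℝ → Prop
  | zero : Fusible 0
  | step (x y : ℝ) : Fusible x → Fusible y →
      max x y < (x + y + 1) / 2 → Fusible ((x + y + 1) / 2)

theorem real_induction {α : Type*} [ConditionallyCompleteLinearOrder α] {P : α → Prop} (a : α)
    (hbase : ∀ r ≤ a, P r) (hlim : ∀ s, (∀ r < s, P r) → P s)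
    (hstep : ∀ s, P s → ∃ t > s, ∀ r < t, P r) (r : α) : P r := by
  by_contra hr
  have hbdd : BddBelow {r | ¬P r} :=
    ⟨a, fun r hr => le_of_not_ge fun hra => hr (hbase r hra)⟩
  set s := sInf {r | ¬P r}
  have hs : P s := hlim s fun r hrs => not_not.1 fun hr => (csInf_le hbdd hr).not_gt hrs
  obtain ⟨t, hst, ht⟩ := hstep s hs
  obtain ⟨r', hr', hr't⟩ := exists_lt_of_csInf_lt ⟨r, hr⟩ hst
  exact hr' (ht r' hr't)

namespace Set

variable {α : Type*}

theorem isWF_of_forall_isWF_inter_Iio [Preorder α] {S : Set α}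
    (h : ∀ a ∈ S, (S ∩ Iio a).IsWF) : S.IsWF := by
  rw [isWF_iff_no_descending_seq]
  intro f hf hfS
  refine (isWF_iff_no_descending_seq.mp (h (f 0) (hfS 0))) (fun n => f (n + 1))
    (hf.comp_strictMono (strictMono_id.add_const 1)) fun n => ⟨hfS (n + 1), ?_⟩
  exact hf (Nat.succ_pos n)

theorem isWF_inter_Iio_of_forall_lt [Preorder α] {S : Set α} {s : α}
    (h : ∀ r < s, (S ∩ Iio r).IsWF) : (S ∩ Iio s).IsWF :=
  isWF_of_forall_isWF_inter_Iio fun a ha =>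
    (h a ha.2).mono (inter_subset_inter_left _ inter_subset_left)

theorem IsWF.exists_gap_above [LinearOrder α] {S : Set α} {s a : α} (hS : (S ∩ Iio s).IsWF)
    (has : a < s) : ∃ b > a, Disjoint S (Ioo a b) := by
  have hT : (insert s (S ∩ Ioo a s)).IsWF :=
    (hS.mono (inter_subset_inter_right _ Ioo_subset_Iio_self)).insert s
  have hne : (insert s (S ∩ Ioo a s)).Nonempty := insert_nonempty _ _
  refine ⟨hT.min hne, ?_, disjoint_left.2 fun z hzS hz => hT.not_lt_min hne ?_ hz.2⟩
  · rcases hT.min_mem hne with h | h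
    · exact h.symm ▸ has
    · exact h.2.1
  · have hmin_le : hT.min hne ≤ s := hT.min_le hne (mem_insert s _)
    exact mem_insert_of_mem _ ⟨hzS, hz.1, hz.2.trans_le hmin_le⟩

end Set

theorem Fusible.nonneg {x : ℝ} (h : Fusible x) : 0 ≤ x := by
  induction h with
  | zero => exact le_rfl
  | step x y _ _ _ ihx ihy => linarith

theorem Fusible.inter_Iio_subset {s b : ℝ} (hgap : Disjoint {x | Fusible x} (Ioo (s - 1) b)) :
    {x | Fusible x} ∩ Iio ((s + b + 1) / 2) ⊆ insert 0 ({x | Fusible x} ∩ Iio s ∪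
      (fun w => (w + 1) / 2) '' ({x | Fusible x} ∩ Iio s + {x | Fusible x} ∩ Iio s)) := by
  rintro z ⟨hz, hzt : z < (s + b + 1) / 2⟩
  rcases lt_or_ge z s with hzs | hsz
  · exact mem_insert_of_mem _ (Or.inl ⟨hz, hzs⟩)
  cases hz with
  | zero => exact mem_insert 0 _
  | step x y hx hy hfuse =>
    refine mem_insert_of_mem _ (Or.inr ⟨x + y, ?_, rfl⟩)
    rcases lt_or_ge (max x y) s with hmax | hmax
    · exact add_mem_add ⟨hx, (le_max_left x y).trans_lt hmax⟩
        ⟨hy, (le_max_right x y).trans_lt hmax⟩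
    have hmin : Fusible (min x y) := by rcases min_choice x y with h | h <;> rw [h] <;> assumption
    have := min_add_max x y
    exact absurd ⟨by linarith, by linarith⟩ (disjoint_left.1 hgap hmin)

theorem Fusible.isWF_inter_Iio_fusion {s b : ℝ} (hs : ({x | Fusible x} ∩ Iio s).IsWF)
    (hgap : Disjoint {x | Fusible x} (Ioo (s - 1) b)) :
    ({x | Fusible x} ∩ Iio ((s + b + 1) / 2)).IsWF := by
  have hhalf : Monotone fun w : ℝ => (w + 1) / 2 := fun u v huv => by dsimp only; linarith
  refine IsWF.mono (IsWF.insert (hs.union ?_) 0) (Fusible.inter_Iio_subset hgap)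
  exact ((hs.add hs).isPWO.image_of_monotone hhalf).isWF

theorem fusible_wellOrdered : {x : ℝ | Fusible x}.WellFoundedOn (· < ·) := by
  have hgood : ∀ r, ({x | Fusible x} ∩ Iio r).IsWF := by
    refine real_induction 0 (fun r hr => ?_) (fun s => isWF_inter_Iio_of_forall_lt) fun s hs => ?_
    · exact isWF_empty.mono fun x ⟨hx, hxr⟩ => (lt_of_lt_of_le hxr hr).not_ge hx.nonneg
    obtain ⟨b, hb, hgap⟩ := hs.exists_gap_above (sub_one_lt s)
    refine ⟨(s + b + 1) / 2, by linarith, fun r hr => ?_⟩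
    exact (Fusible.isWF_inter_Iio_fusion hs hgap).mono
      (inter_subset_inter_right _ (Iio_subset_Iio hr.le))
  exact isWF_of_forall_isWF_inter_Iio fun a _ => hgood a
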